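/- arXiv:2405.00327 — 7 statements merged into one kernel-verified Lean document; each statement's English description precedes it below -/
import Mathlib

section
/- Let μ ∈ (1,2) and x ∈ [0,1), and let b_1 b_2 b_3 ⋯ be the infinite tent code of x, i.e. b_1⋯b_n = γ^n(x) for every n ≥ 1. Then (μ − 1) · Σ_{i=1}^{∞} b_i μ^{−i} = x. -/
open Set MeasureTheory

/-- The tent map `f(x) = μx` for `x ≤ 1/2` and `μ(1-x)` for `x ≥ 1/2`. -/
noncomputable def tentMap (μ : ℝ) (x : ℝ) : ℝ :=
  if x ≤ 1/2 then μ * x else μ * (1 - x)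

/-- `tentBit μ x k` is the `(k+1)`-st bit `b_{k+1}` of the tent code of `x`. -/
noncomputable def tentBit (μ x : ℝ) : ℕ → Bool
  | 0 => if 1/2 ≤ x then true else false
  | k + 1 =>
    if (tentMap μ)^[k+1] x < 1/2 then tentBit μ x k
    else if 1/2 < (tentMap μ)^[k+1] x then !(tentBit μ x k)
    else true

/-- The tent code `γ^n(x) = b_1 ⋯ b_n`. -/
noncomputable def tentCode (μ : ℝ) (n : ℕ) (x : ℝ) : List Bool :=
  (List.range n).map (tentBit μ x)

/-- The tent language `L_n = {γ^n(x) : x ∈ [0,1)}`. -/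
def tentLang (μ : ℝ) (n : ℕ) : Set (List Bool) :=
  {w | ∃ x ∈ Set.Ico (0:ℝ) 1, tentCode μ n x = w}

/-- The segment-type `T(w) = {f^n(x) : x ∈ [0,1), γ^n(x) = w}`. -/
def segType (μ : ℝ) (n : ℕ) (w : List Bool) : Set ℝ :=
  {y | ∃ x ∈ Set.Ico (0:ℝ) 1, tentCode μ n x = w ∧ (tentMap μ)^[n] x = y}

/-- The set of segment-types `𝒯_n = {T(w) : w ∈ L_n}`. -/
def typeSet (μ : ℝ) (n : ℕ) : Set (Set ℝ) :=
  {S | ∃ w ∈ tentLang μ n, segType μ n w = S}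

/-- `I_i = T(γ^i(1/2))`. -/
noncomputable def Iseg (μ : ℝ) (i : ℕ) : Set ℝ :=
  segType μ i (tentCode μ i (1/2))

/-- `Ī_i = T(c̄_i)` where `c̄_i` is the bitwise complement of `γ^i(1/2)`. -/
noncomputable def Isegbar (μ : ℝ) (i : ℕ) : Set ℝ :=
  segType μ i ((tentCode μ i (1/2)).map (fun b => !b))

/-- The length of the interval `T(w)` (zero if `T(w)` is empty). -/
noncomputable def segLen (μ : ℝ) (n : ℕ) (w : List Bool) : ℝ :=
  (MeasureTheory.volume (segType μ n w)).toReal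

/-- `(μ - 1) · Σ_{i=1}^∞ b_i μ^{-i} = x` for the infinite tent code of `x`. -/
theorem tent_code_expansion (μ : ℝ) (hμ1 : 1 < μ) (hμ2 : μ < 2)
    (x : ℝ) (hx : x ∈ Set.Ico (0:ℝ) 1) :
    (μ - 1) * ∑' i : ℕ, (if tentBit μ x i then (1:ℝ) else 0) * μ⁻¹ ^ (i + 1) = x := by
  obtain ⟨hx0, hx1⟩ := hx
  have hμ0 : (0:ℝ) < μ := by linarith
  have hμne : μ ≠ 0 := ne_of_gt hμ0
  set X : ℕ → ℝ := fun n => (tentMap μ)^[n] x with hXdef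
  have hXsucc : ∀ n, X (n + 1) = tentMap μ (X n) := by
    intro n
    simp only [hXdef]
    exact Function.iterate_succ_apply' _ _ _
  have hXbound : ∀ n, 0 ≤ X n ∧ X n ≤ 1 := by
    intro n
    induction n with
    | zero => exact ⟨hx0, hx1.le⟩
    | succ n ih =>
      obtain ⟨h0, h1⟩ := ih
      rw [hXsucc]
      unfold tentMap
      split <;> constructor <;> nlinarith
  set Bb : ℕ → Bool := fun n => Nat.rec false (fun k _ => tentBit μ x k) n with hBbdef
  have hBb0 : Bb 0 = false := rfl
  have hBbS : ∀ n, Bb (n + 1) = tentBit μ x n := fun n => rfl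
  set R : ℕ → ℝ := fun n => if Bb n then 1 - X n else X n with hRdef
  have hR0 : R 0 = x := by
    simp only [hRdef, hBb0]
    simp [hXdef]
  -- the bit recursion, uniformly in n (including n = 0)
  have hbit : ∀ n, tentBit μ x n =
      (if X n < 1/2 then Bb n else if 1/2 < X n then !(Bb n) else true) := by
    intro n
    cases n with
    | zero =>
      simp only [hBb0]
      have hX0 : X 0 = x := by simp [hXdef]
      rw [hX0]
      show (if (1:ℝ)/2 ≤ x then true else false)
          = if x < 1/2 then false else if 1/2 < x then !false else true
      by_cases h : x < 1/2
      · rw [if_pos h, if_neg (not_le.mpr h)]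
      · rw [if_neg h]
        by_cases h2 : (1:ℝ)/2 < x
        · rw [if_pos h2, if_pos h2.le, Bool.not_false]
        · rw [if_neg h2, if_pos (not_lt.mp h)]
    | succ k =>
      rw [hBbS k]
      show tentBit μ x (k + 1) = _
      rw [tentBit]
  -- key step identity
  have hstep : ∀ n, μ * R n = (μ - 1) * (if tentBit μ x n then (1:ℝ) else 0) + R (n + 1) := by
    intro n
    have hb := hbit n
    have hXs := hXsucc n
    have e1 : R n = if Bb n then 1 - X n else X n := rfl
    have e2 : R (n + 1) = if tentBit μ x n then 1 - X (n + 1) else X (n + 1) := rfl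
    rcases lt_trichotomy (X n) (1/2 : ℝ) with h | h | h
    · have hb' : tentBit μ x n = Bb n := by rw [hb, if_pos h]
      have hX' : X (n + 1) = μ * X n := by
        rw [hXs]; unfold tentMap; rw [if_pos h.le]
      rw [e1, e2, hb', hX']
      cases hBn : Bb n <;> simp [hBn] <;> ring
    · have hb' : tentBit μ x n = true := by
        rw [hb, if_neg (by rw [h]; exact lt_irrefl _), if_neg (by rw [h]; exact lt_irrefl _)]
      have hX' : X (n + 1) = μ * X n := by
        rw [hXs]; unfold tentMap; rw [if_pos h.le]
      rw [e1, e2, hb', hX', h]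
      cases hBn : Bb n <;> simp [hBn] <;> ring
    · have hb' : tentBit μ x n = !(Bb n) := by
        rw [hb, if_neg (not_lt.mpr h.le), if_pos h]
      have hX' : X (n + 1) = μ * (1 - X n) := by
        rw [hXs]; unfold tentMap; rw [if_neg (not_le.mpr h)]
      rw [e1, e2, hb', hX']
      cases hBn : Bb n <;> simp [hBn] <;> ring
  -- partial-sum identity
  have key : ∀ n, (μ - 1) * ∑ i ∈ Finset.range n,
      (if tentBit μ x i then (1:ℝ) else 0) * μ⁻¹ ^ (i + 1) + R n * μ⁻¹ ^ n = x := by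
    intro n
    induction n with
    | zero => simpa using hR0
    | succ n ih =>
      rw [Finset.sum_range_succ]
      have hs := hstep n
      have hpow : μ⁻¹ ^ (n + 1) = μ⁻¹ ^ n * μ⁻¹ := pow_succ _ _
      have hmul : μ * μ⁻¹ = 1 := mul_inv_cancel₀ hμne
      have hRn : R n * μ⁻¹ ^ n =
          (μ - 1) * (if tentBit μ x n then (1:ℝ) else 0) * μ⁻¹ ^ (n + 1)
          + R (n + 1) * μ⁻¹ ^ (n + 1) := by
        have : R n * μ⁻¹ ^ n = (μ * R n) * μ⁻¹ * μ⁻¹ ^ n := by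
          rw [mul_assoc μ (R n) μ⁻¹, mul_comm (R n) μ⁻¹, ← mul_assoc, hmul]; ring
        rw [this, hs, hpow]; ring
      linear_combination ih - hRn
  -- bounds on R
  have hRbound : ∀ n, 0 ≤ R n ∧ R n ≤ 1 := by
    intro n
    obtain ⟨h0, h1⟩ := hXbound n
    simp only [hRdef]
    split <;> constructor <;> linarith
  have hinv1 : μ⁻¹ < 1 := by
    rw [inv_lt_one_iff₀]; right; exact hμ1
  have hinv0 : (0:ℝ) ≤ μ⁻¹ := inv_nonneg.mpr hμ0.le
  -- the remainder tends to 0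
  have hrem : Filter.Tendsto (fun n => R n * μ⁻¹ ^ n) Filter.atTop (nhds 0) := by
    have hgeo : Filter.Tendsto (fun n : ℕ => μ⁻¹ ^ n) Filter.atTop (nhds 0) :=
      tendsto_pow_atTop_nhds_zero_of_lt_one hinv0 hinv1
    apply squeeze_zero
    · intro n
      exact mul_nonneg (hRbound n).1 (pow_nonneg hinv0 n)
    · intro n
      calc R n * μ⁻¹ ^ n ≤ 1 * μ⁻¹ ^ n :=
            mul_le_mul_of_nonneg_right (hRbound n).2 (pow_nonneg hinv0 n)
        _ = μ⁻¹ ^ n := one_mul _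
    · exact hgeo
  -- partial sums tend to x
  set f : ℕ → ℝ := fun i => (if tentBit μ x i then (1:ℝ) else 0) * μ⁻¹ ^ (i + 1) with hfdef
  have hparts : Filter.Tendsto (fun n => (μ - 1) * ∑ i ∈ Finset.range n, f i)
      Filter.atTop (nhds x) := by
    have : (fun n => (μ - 1) * ∑ i ∈ Finset.range n, f i)
        = fun n => x - R n * μ⁻¹ ^ n := by
      funext n
      have := key n
      simp only [hfdef]
      linarith
    rw [this]
    simpa using Filter.Tendsto.sub (tendsto_const_nhds (x := x)) hrem
  -- summability
  have hsummable : Summable f := by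
    apply Summable.of_nonneg_of_le
    · intro i
      apply mul_nonneg
      · split <;> norm_num
      · exact pow_nonneg hinv0 _
    · intro i
      show (if tentBit μ x i then (1:ℝ) else 0) * μ⁻¹ ^ (i + 1) ≤ μ⁻¹ ^ (i + 1)
      split
      · rw [one_mul]
      · rw [zero_mul]; exact pow_nonneg hinv0 _
    · have : Summable (fun i : ℕ => μ⁻¹ ^ i) := summable_geometric_of_lt_one hinv0 hinv1
      simpa [pow_succ, mul_comm] using this.mul_left μ⁻¹
  have hhs := hsummable.hasSum
  have htend : Filter.Tendsto (fun n => (μ - 1) * ∑ i ∈ Finset.range n, f i)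
      Filter.atTop (nhds ((μ - 1) * ∑' i, f i)) :=
    (hhs.tendsto_sum_nat).const_mul (μ - 1)
  exact tendsto_nhds_unique htend hparts
end

section
/- Let μ ∈ (1,2) and n ≥ 1. For any x, x' ∈ [0,1), if x ≤ x' then γ^n(x) ⪯ γ^n(x') in lexicographic order. -/
open Set MeasureTheory

/-!
The bit `b_{k+1}` is obtained from `b_k` and the position of `f^k x` relative to `1/2`: after
`b_k = 0` it is `1` iff `f^k x ≥ 1/2`, after `b_k = 1` it is `1` iff `f^k x ≤ 1/2`. Hence `b_k` is the
orientation of `f^k` on the current branch (`f` is increasing left of `1/2` and decreasing right of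
it), and by induction, as long as the codes of `x ≤ x'` agree, `f^k x ≤ f^k x'` when `b_k = 0` and
`f^k x' ≤ f^k x` when `b_k = 1`. In both cases the next bit of `x` is at most that of `x'`, so the
first differing bit is `0` for `x` and `1` for `x'`.
-/

noncomputable def prevBit (μ x : ℝ) : ℕ → Bool
  | 0 => false
  | k + 1 => tentBit μ x k

noncomputable def nextBit (p : Bool) (v : ℝ) : Bool :=
  bif p then decide (v ≤ 1/2) else decide (1/2 ≤ v)

def OrientedLE (p : Bool) (a c : ℝ) : Prop :=
  bif p then c ≤ a else a ≤ c

lemma nextBit_eq_ite (p : Bool) (v : ℝ) :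
    nextBit p v = if v < 1/2 then p else if 1/2 < v then !p else true := by
  cases p <;> split_ifs <;> simp [nextBit] <;> linarith

lemma tentBit_eq_nextBit (μ x : ℝ) (k : ℕ) :
    tentBit μ x k = nextBit (prevBit μ x k) ((tentMap μ)^[k] x) := by
  cases k with
  | zero => simp [tentBit, prevBit, nextBit]
  | succ k => rw [nextBit_eq_ite]; rfl

lemma prevBit_congr {μ x x' : ℝ} {k : ℕ} (h : ∀ j < k, tentBit μ x j = tentBit μ x' j) :
    prevBit μ x k = prevBit μ x' k := by
  cases k with
  | zero => rfl
  | succ j => exact h j j.lt_succ_self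

lemma tentMap_monotoneOn {μ : ℝ} (hμ : 0 ≤ μ) : MonotoneOn (tentMap μ) (Iic (1/2)) := by
  intro a ha c hc hac
  simp only [tentMap, if_pos (mem_Iic.1 ha), if_pos (mem_Iic.1 hc)]
  exact mul_le_mul_of_nonneg_left hac hμ

lemma tentMap_antitoneOn {μ : ℝ} (hμ : 0 ≤ μ) : AntitoneOn (tentMap μ) (Ici (1/2)) := by
  have hformula : ∀ a ∈ Ici (1/2 : ℝ), tentMap μ a = μ * (1 - a) := by
    intro a ha
    unfold tentMap
    split_ifs with h
    · rw [le_antisymm h ha]; ring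
    · rfl
  intro a ha c hc hac
  rw [hformula a ha, hformula c hc]
  exact mul_le_mul_of_nonneg_left (by linarith) hμ

lemma nextBit_le_nextBit {p : Bool} {a c : ℝ} (h : OrientedLE p a c) :
    nextBit p a ≤ nextBit p c := by
  cases p <;> simp only [OrientedLE, nextBit, cond_false, cond_true] at h ⊢ <;>
    simp only [Bool.le_iff_imp, decide_eq_true_eq] <;> intro <;> linarith

lemma orientedLE_tentMap {μ : ℝ} (hμ : 0 ≤ μ) {p : Bool} {a c : ℝ} (h : OrientedLE p a c)
    (hbit : nextBit p a = nextBit p c) :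
    OrientedLE (nextBit p a) (tentMap μ a) (tentMap μ c) := by
  cases p
  · change a ≤ c at h
    change decide (1/2 ≤ a) = decide (1/2 ≤ c) at hbit
    by_cases ha : 1/2 ≤ a
    · rw [show nextBit false a = true from decide_eq_true ha]
      exact tentMap_antitoneOn hμ ha (ha.trans h) h
    · have hc : ¬1/2 ≤ c := of_decide_eq_false (hbit ▸ decide_eq_false ha)
      rw [show nextBit false a = false from decide_eq_false ha]
      exact tentMap_monotoneOn hμ (not_le.1 ha).le (not_le.1 hc).le h
  · change c ≤ a at h
    change decide (a ≤ 1/2) = decide (c ≤ 1/2) at hbit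
    by_cases ha : a ≤ 1/2
    · rw [show nextBit true a = true from decide_eq_true ha]
      exact tentMap_monotoneOn hμ (h.trans ha) ha h
    · have hc : ¬c ≤ 1/2 := of_decide_eq_false (hbit ▸ decide_eq_false ha)
      rw [show nextBit true a = false from decide_eq_false ha]
      exact tentMap_antitoneOn hμ (not_le.1 hc).le (not_le.1 ha).le h

lemma orientedLE_iterate {μ : ℝ} (hμ : 0 ≤ μ) {x x' : ℝ} (hle : x ≤ x') :
    ∀ m, (∀ j < m, tentBit μ x j = tentBit μ x' j) →
      OrientedLE (prevBit μ x m) ((tentMap μ)^[m] x) ((tentMap μ)^[m] x')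
  | 0, _ => hle
  | m + 1, hagree => by
    have hprev : prevBit μ x m = prevBit μ x' m :=
      prevBit_congr fun j hj => hagree j (hj.trans m.lt_succ_self)
    have hbit := hagree m m.lt_succ_self
    rw [tentBit_eq_nextBit, tentBit_eq_nextBit, ← hprev] at hbit
    have := orientedLE_tentMap hμ
      (orientedLE_iterate hμ hle m fun j hj => hagree j (hj.trans m.lt_succ_self)) hbit
    rwa [prevBit, tentBit_eq_nextBit, Function.iterate_succ_apply', Function.iterate_succ_apply']

lemma tentBit_le_of_forall_lt_eq {μ : ℝ} (hμ : 0 ≤ μ) {x x' : ℝ} (hle : x ≤ x') {i : ℕ}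
    (hagree : ∀ j < i, tentBit μ x j = tentBit μ x' j) : tentBit μ x i ≤ tentBit μ x' i := by
  rw [tentBit_eq_nextBit, tentBit_eq_nextBit, ← prevBit_congr hagree]
  exact nextBit_le_nextBit (orientedLE_iterate hμ hle i hagree)

lemma Bool.lex_of_forall_lt_eq_imp_le {b b' : ℕ → Bool}
    (h : ∀ i, (∀ j < i, b j = b' j) → b i ≤ b' i) (n : ℕ) :
    (∀ j < n, b j = b' j) ∨ ∃ i < n, (∀ j < i, b j = b' j) ∧ b i = false ∧ b' i = true := by
  by_cases hall : ∀ j < n, b j = b' j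
  · exact .inl hall
  push Not at hall
  have hmin : ∀ j < Nat.find hall, b j = b' j := fun j hj =>
    by_contra fun hne => Nat.find_min hall hj ⟨hj.trans (Nat.find_spec hall).1, hne⟩
  exact .inr ⟨_, (Nat.find_spec hall).1, hmin,
    Bool.lt_iff.1 ((h _ hmin).lt_of_ne (Nat.find_spec hall).2)⟩

theorem tent_code_lex_mono_general (μ : ℝ) (hμ1 : 1 < μ) (n : ℕ)
    (x x' : ℝ) (hle : x ≤ x') :
    tentCode μ n x = tentCode μ n x' ∨
      ∃ i < n, (∀ j < i, tentBit μ x j = tentBit μ x' j) ∧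
        tentBit μ x i = false ∧ tentBit μ x' i = true := by
  refine (Bool.lex_of_forall_lt_eq_imp_le
    (fun i => tentBit_le_of_forall_lt_eq (by linarith) hle) n).imp_left fun h => ?_
  exact List.map_congr_left fun j hj => h j (List.mem_range.1 hj)

/-- monotonicity of the tent code in the lexicographic order. -/
theorem tent_code_lex_mono (μ : ℝ) (hμ1 : 1 < μ) (hμ2 : μ < 2) (n : ℕ) (hn : 1 ≤ n)
    (x x' : ℝ) (hx : x ∈ Set.Ico (0:ℝ) 1) (hx' : x' ∈ Set.Ico (0:ℝ) 1) (hle : x ≤ x') :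
    tentCode μ n x = tentCode μ n x' ∨
      ∃ i < n, (∀ j < i, tentBit μ x j = tentBit μ x' j) ∧
        tentBit μ x i = false ∧ tentBit μ x' i = true :=
  tent_code_lex_mono_general μ hμ1 n x x' hle
end

section
/- Let μ ∈ (1,2) and n ≥ 1. The n-bit tent code is right continuous: for every x ∈ [0,1) there exists δ > 0 such that γ^n(y) = γ^n(x) for every y ∈ [0,1) with x ≤ y < x + δ. -/
open Set MeasureTheory

/-!
Just to the right of `x`, every iterate `f^k` is affine with slope `±μ^k`, and the sign is read off
the code: with `b_0 := 0`, the slope of `f^k` on `[x, x + δ)` is `(-1)^{b_k} μ^k`. Given this for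
`k`, the bit `b_{k+1}` of every `y` slightly right of `x` is decided by which side of `1/2` the
point `f^k(y)` lies on. If `f^k(x) ≠ 1/2`, that is the side of `f^k(x)`. If `f^k(x) = 1/2`, the
slope sign forces `f^k(y)` to the side that produces `b_{k+1}(y) = 1 = b_{k+1}(x)`. In both cases
the sign of the slope of `f^{k+1}` is again `(-1)^{b_{k+1}}`.
-/

open Filter Topology

noncomputable def nextTentBit (b : Bool) (X : ℝ) : Bool :=
  if X < 1/2 then b else if 1/2 < X then !b else true

def slopeSign : Bool → ℝ
  | false => 1
  | true => -1

/-- The paper's `b_k` (with `b_0 := 0`), whereas `tentBit μ x k` is `b_{k+1}`. -/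
noncomputable def precedingTentBit (μ x : ℝ) : ℕ → Bool
  | 0 => false
  | k + 1 => tentBit μ x k

theorem tentMap_of_le {μ X : ℝ} (h : X ≤ 1/2) : tentMap μ X = μ * X := if_pos h

theorem tentMap_of_ge {μ X : ℝ} (h : 1/2 ≤ X) : tentMap μ X = μ * (1 - X) := by
  rcases h.eq_or_lt with rfl | h
  · rw [tentMap_of_le le_rfl]; ring
  · exact if_neg h.not_ge

theorem nextTentBit_of_lt {b : Bool} {X : ℝ} (h : X < 1/2) : nextTentBit b X = b := if_pos h

theorem nextTentBit_of_gt {b : Bool} {X : ℝ} (h : 1/2 < X) : nextTentBit b X = !b := by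
  rw [nextTentBit, if_neg h.not_gt, if_pos h]

theorem nextTentBit_half (b : Bool) : nextTentBit b (1/2) = true := by
  simp [nextTentBit]

theorem tentBit_eq_nextTentBit (μ x : ℝ) (k : ℕ) :
    tentBit μ x k = nextTentBit (precedingTentBit μ x k) ((tentMap μ)^[k] x) := by
  cases k with
  | zero =>
    change (if 1/2 ≤ x then true else false) = nextTentBit false x
    rcases lt_or_ge x (1/2) with h | h
    · rw [if_neg h.not_ge, nextTentBit_of_lt h]
    · rw [if_pos h]
      rcases h.eq_or_lt with rfl | h
      · exact (nextTentBit_half false).symm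
      · rw [nextTentBit_of_gt h]; rfl
  | succ k => rfl

theorem precedingTentBit_eq_of_tentBit_eq {μ x y : ℝ} {i : ℕ}
    (h : ∀ k < i, tentBit μ y k = tentBit μ x k) :
    precedingTentBit μ y i = precedingTentBit μ x i := by
  cases i with
  | zero => rfl
  | succ k => exact h k k.lt_succ_self

section Step

variable {b : Bool} {X Y d : ℝ}

theorem nextTentBit_add_slopeSign_mul (hd : 0 < d) (hsmall : X ≠ 1/2 → d < |X - 1/2|)
    (hY : Y = X + slopeSign b * d) :
    nextTentBit b Y = nextTentBit b X := by
  rcases lt_trichotomy X (1/2) with hX | rfl | hX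
  · have hdX := hsmall hX.ne
    rw [abs_of_neg (by linarith)] at hdX
    have hY' : Y < 1/2 := by cases b <;> simp only [slopeSign] at hY <;> linarith
    rw [nextTentBit_of_lt hX, nextTentBit_of_lt hY']
  · cases b <;> simp only [slopeSign] at hY
    · rw [nextTentBit_of_gt (by linarith), nextTentBit_half]; rfl
    · rw [nextTentBit_of_lt (by linarith), nextTentBit_half]
  · have hdX := hsmall hX.ne'
    rw [abs_of_pos (by linarith)] at hdX
    have hY' : 1/2 < Y := by cases b <;> simp only [slopeSign] at hY <;> linarith
    rw [nextTentBit_of_gt hX, nextTentBit_of_gt hY']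

theorem tentMap_add_slopeSign_mul (μ : ℝ) (hd : 0 < d) (hsmall : X ≠ 1/2 → d < |X - 1/2|)
    (hY : Y = X + slopeSign b * d) :
    tentMap μ Y = tentMap μ X + slopeSign (nextTentBit b X) * (μ * d) := by
  rcases lt_trichotomy X (1/2) with hX | rfl | hX
  · have hdX := hsmall hX.ne
    rw [abs_of_neg (by linarith)] at hdX
    have hY' : Y < 1/2 := by cases b <;> simp only [slopeSign] at hY <;> linarith
    rw [nextTentBit_of_lt hX, tentMap_of_le hX.le, tentMap_of_le hY'.le, hY]; ring
  · rw [nextTentBit_half, tentMap_of_le le_rfl]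
    cases b <;> simp only [slopeSign] at hY ⊢
    · rw [tentMap_of_ge (by linarith), hY]; ring
    · rw [tentMap_of_le (by linarith), hY]; ring
  · have hdX := hsmall hX.ne'
    rw [abs_of_pos (by linarith)] at hdX
    have hY' : 1/2 < Y := by cases b <;> simp only [slopeSign] at hY <;> linarith
    rw [nextTentBit_of_gt hX, tentMap_of_ge hX.le, tentMap_of_ge hY'.le, hY]
    cases b <;> simp only [slopeSign, Bool.not_true, Bool.not_false] <;> ring

end Step

theorem eventually_mul_sub_lt (x c : ℝ) {r : ℝ} (hr : 0 < r) :
    ∀ᶠ y in 𝓝[>] x, c * (y - x) < r := by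
  have hlim : Tendsto (fun y => c * (y - x)) (𝓝[>] x) (𝓝 0) :=
    ((continuous_const.mul (continuous_id.sub continuous_const)).tendsto' x 0
      (by simp)).mono_left nhdsWithin_le_nhds
  exact hlim.eventually_lt_const hr

theorem eventually_tentBit_eq_and_iterate_eq {μ : ℝ} (hμ : 0 < μ) (x : ℝ) (i : ℕ) :
    ∀ᶠ y in 𝓝[>] x, (∀ k < i, tentBit μ y k = tentBit μ x k) ∧
      (tentMap μ)^[i] y =
        (tentMap μ)^[i] x + slopeSign (precedingTentBit μ x i) * (μ ^ i * (y - x)) := by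
  induction i with
  | zero => exact Eventually.of_forall fun y => ⟨nofun, by simp [precedingTentBit, slopeSign]⟩
  | succ i ih =>
    set X := (tentMap μ)^[i] x
    have hsmall : ∀ᶠ y in 𝓝[>] x, X ≠ 1/2 → μ ^ i * (y - x) < |X - 1/2| := by
      by_cases hX : X = 1/2
      · exact Eventually.of_forall fun _ h => absurd hX h
      · filter_upwards [eventually_mul_sub_lt x (μ ^ i) (abs_pos.2 (sub_ne_zero.2 hX))]
          with y hy _ using hy
    filter_upwards [ih, self_mem_nhdsWithin, hsmall] with y ⟨hbits, hiter⟩ (hxy : x < y) hclose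
    have hd : 0 < μ ^ i * (y - x) := mul_pos (pow_pos hμ i) (sub_pos.2 hxy)
    have hprev := precedingTentBit_eq_of_tentBit_eq hbits
    refine ⟨fun k hk => ?_, ?_⟩
    · rcases Nat.lt_succ_iff_lt_or_eq.1 hk with hk | rfl
      · exact hbits k hk
      · rw [tentBit_eq_nextTentBit, tentBit_eq_nextTentBit, hprev]
        exact nextTentBit_add_slopeSign_mul hd hclose hiter
    · rw [Function.iterate_succ_apply', Function.iterate_succ_apply',
        tentMap_add_slopeSign_mul μ hd hclose hiter, precedingTentBit, tentBit_eq_nextTentBit,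
        pow_succ]
      ring

theorem tentCode_eq_of_tentBit_eq {μ x y : ℝ} {n : ℕ}
    (h : ∀ k < n, tentBit μ y k = tentBit μ x k) : tentCode μ n y = tentCode μ n x :=
  List.map_congr_left fun k hk => h k (List.mem_range.1 hk)

theorem tent_code_right_continuous_general (μ : ℝ) (hμ1 : 1 < μ)
    (n : ℕ) (x : ℝ) :
    ∃ δ > (0:ℝ), ∀ y ∈ Set.Ico (0:ℝ) 1, x ≤ y → y < x + δ →
      tentCode μ n y = tentCode μ n x := by
  obtain ⟨u, hxu, hu⟩ := mem_nhdsGT_iff_exists_Ioo_subset.1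
    (eventually_tentBit_eq_and_iterate_eq (zero_lt_one.trans hμ1) x n)
  refine ⟨u - x, sub_pos.2 hxu, fun y _ hxy hyu => ?_⟩
  rcases hxy.eq_or_lt with rfl | hxy
  · rfl
  · exact tentCode_eq_of_tentBit_eq (hu ⟨hxy, by linarith⟩).1

/-- right continuity of the `n`-bit tent code. -/
theorem tent_code_right_continuous (μ : ℝ) (hμ1 : 1 < μ) (hμ2 : μ < 2)
    (n : ℕ) (hn : 1 ≤ n) (x : ℝ) (hx : x ∈ Set.Ico (0:ℝ) 1) :
    ∃ δ > (0:ℝ), ∀ y ∈ Set.Ico (0:ℝ) 1, x ≤ y → y < x + δ →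
      tentCode μ n y = tentCode μ n x :=
  tent_code_right_continuous_general μ hμ1 n x
end

section
/- Let μ ∈ (1,2) and n ≥ 1. Suppose x, x' ∈ [0,1) satisfy x < x' and γ^n(x) = γ^n(x') = b_1⋯b_n. Then f^n(x) < f^n(x') if b_n = 0, and f^n(x) > f^n(x') if b_n = 1. -/
open Set MeasureTheory

/-! Along a common code the bit `b_k` records whether `f^k` preserves (`false`) or reverses
(`true`) the order of `x < x'`. Equal next bits force `f^k x` and `f^k x'` into the same monotone
branch of the tent map, and the bit update flips exactly when that branch is the decreasing one. -/

namespace TentMap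

variable {μ : ℝ}

theorem strictMonoOn_Iic (hμ : 0 < μ) : StrictMonoOn (tentMap μ) (Iic (1/2)) := by
  intro u hu v hv huv
  simp only [tentMap, if_pos (show u ≤ 1/2 from hu), if_pos (show v ≤ 1/2 from hv)]
  exact mul_lt_mul_of_pos_left huv hμ

theorem strictAntiOn_Ici (hμ : 0 < μ) : StrictAntiOn (tentMap μ) (Ici (1/2)) := by
  intro u hu v hv huv
  have hv' : ¬ v ≤ 1/2 := fun h => by simp only [mem_Ici] at hu; linarith
  by_cases hu' : u ≤ 1/2
  · simp only [tentMap, if_pos hu', if_neg hv']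
    nlinarith [le_antisymm hu' hu]
  · simp only [tentMap, if_neg hu', if_neg hv']
    nlinarith

/-- `nextBit b_i x_i = b_{i+1}`; starting from `b_0 = false` it also yields `b_1`. -/
noncomputable def nextBit (b : Bool) (y : ℝ) : Bool :=
  if y < 1/2 then b else if 1/2 < y then !b else true

theorem nextBit_false_eq_false_iff {y : ℝ} : nextBit false y = false ↔ y < 1/2 := by
  unfold nextBit
  split_ifs <;> simp_all

theorem nextBit_true_eq_false_iff {y : ℝ} : nextBit true y = false ↔ 1/2 < y := by
  unfold nextBit
  split_ifs with h₁ h₂ <;> simp_all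
  linarith

theorem tentBit_zero (x : ℝ) : tentBit μ x 0 = nextBit false x := by
  unfold tentBit nextBit
  split_ifs <;> first | rfl | (exfalso; linarith)

theorem tentBit_succ (x : ℝ) (k : ℕ) :
    tentBit μ x (k + 1) = nextBit (tentBit μ x k) ((tentMap μ)^[k + 1] x) := rfl

theorem tentMap_order_of_nextBit_eq (hμ : 0 < μ) {b : Bool} {u v : ℝ}
    (horder : (b = false → u < v) ∧ (b = true → v < u)) (hbit : nextBit b u = nextBit b v) :
    (nextBit b u = false → tentMap μ u < tentMap μ v) ∧
    (nextBit b u = true → tentMap μ v < tentMap μ u) := by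
  cases b
  · have huv := horder.1 rfl
    by_cases hu : u < 1/2
    · have hv : v < 1/2 := by
        rwa [← nextBit_false_eq_false_iff, ← hbit, nextBit_false_eq_false_iff]
      refine ⟨fun _ => strictMonoOn_Iic hμ hu.le hv.le huv, fun h => ?_⟩
      simp [nextBit_false_eq_false_iff.2 hu] at h
    · have hv : ¬ v < 1/2 := by
        rwa [← nextBit_false_eq_false_iff, ← hbit, nextBit_false_eq_false_iff]
      refine ⟨fun h => absurd (nextBit_false_eq_false_iff.1 h) hu,
        fun _ => strictAntiOn_Ici hμ (not_lt.1 hu) (not_lt.1 hv) huv⟩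
  · have hvu := horder.2 rfl
    by_cases hu : 1/2 < u
    · have hv : 1/2 < v := by
        rwa [← nextBit_true_eq_false_iff, ← hbit, nextBit_true_eq_false_iff]
      refine ⟨fun _ => strictAntiOn_Ici hμ hv.le hu.le hvu, fun h => ?_⟩
      simp [nextBit_true_eq_false_iff.2 hu] at h
    · have hv : ¬ 1/2 < v := by
        rwa [← nextBit_true_eq_false_iff, ← hbit, nextBit_true_eq_false_iff]
      refine ⟨fun h => absurd (nextBit_true_eq_false_iff.1 h) hu,
        fun _ => strictMonoOn_Iic hμ (not_lt.1 hv) (not_lt.1 hu) hvu⟩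

theorem iterate_order_of_tentBit_eq (hμ : 0 < μ) {x x' : ℝ} (hlt : x < x') (k : ℕ)
    (hbits : ∀ i ≤ k, tentBit μ x i = tentBit μ x' i) :
    (tentBit μ x k = false → (tentMap μ)^[k + 1] x < (tentMap μ)^[k + 1] x') ∧
    (tentBit μ x k = true → (tentMap μ)^[k + 1] x' < (tentMap μ)^[k + 1] x) := by
  induction k with
  | zero =>
    have h0 := hbits 0 le_rfl
    rw [tentBit_zero, tentBit_zero] at h0
    rw [tentBit_zero, zero_add, Function.iterate_one]
    exact tentMap_order_of_nextBit_eq hμ ⟨fun _ => hlt, by simp⟩ h0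
  | succ k ih =>
    have hk := hbits (k + 1) le_rfl
    have ih := ih fun i hi => hbits i (hi.trans k.le_succ)
    rw [tentBit_succ, tentBit_succ, ← hbits k k.le_succ] at hk
    rw [tentBit_succ, Function.iterate_succ_apply' _ (k + 1), Function.iterate_succ_apply' _ (k + 1)]
    exact tentMap_order_of_nextBit_eq hμ ih hk

theorem tentBit_eq_of_tentCode_eq {x x' : ℝ} {n : ℕ} (hcode : tentCode μ n x = tentCode μ n x')
    {i : ℕ} (hi : i < n) : tentBit μ x i = tentBit μ x' i := by
  simpa [tentCode, hi] using congrArg (·[i]?) hcode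

end TentMap

theorem tent_iterate_order_of_code_eq_general (μ : ℝ) (hμ1 : 1 < μ)
    (n : ℕ) (hn : 1 ≤ n) (x x' : ℝ)
    (hlt : x < x') (hcode : tentCode μ n x = tentCode μ n x') :
    (tentBit μ x (n - 1) = false → (tentMap μ)^[n] x < (tentMap μ)^[n] x') ∧
    (tentBit μ x (n - 1) = true → (tentMap μ)^[n] x' < (tentMap μ)^[n] x) := by
  obtain ⟨k, rfl⟩ : ∃ k, n = k + 1 := ⟨n - 1, by omega⟩
  exact TentMap.iterate_order_of_tentBit_eq (by linarith) hlt k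
    fun i hi => TentMap.tentBit_eq_of_tentCode_eq hcode (Nat.lt_succ_of_le hi)

/-- equal codes and `x < x'` order the iterates according to the last bit. -/
theorem tent_iterate_order_of_code_eq (μ : ℝ) (hμ1 : 1 < μ) (hμ2 : μ < 2)
    (n : ℕ) (hn : 1 ≤ n) (x x' : ℝ) (hx : x ∈ Set.Ico (0:ℝ) 1) (hx' : x' ∈ Set.Ico (0:ℝ) 1)
    (hlt : x < x') (hcode : tentCode μ n x = tentCode μ n x') :
    (tentBit μ x (n - 1) = false → (tentMap μ)^[n] x < (tentMap μ)^[n] x') ∧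
    (tentBit μ x (n - 1) = true → (tentMap μ)^[n] x' < (tentMap μ)^[n] x) :=
  tent_iterate_order_of_code_eq_general μ hμ1 n hn x x' hlt hcode
end

section
/- Let μ ∈ (1,2) and n ≥ 1. If x, x' ∈ [0,1) satisfy γ^n(x) = γ^n(x'), then |f^n(x) − f^n(x')| = μ^n · |x − x'|. -/
open Set MeasureTheory

/-! On each of `[0, 1/2]` and `[1/2, 1]` the tent map is affine with slope `±μ`. Equal codes
force `f^i x` and `f^i x'` into the same half for every `i < n`, since points strictly on
opposite sides of `1/2` turn equal bits into complementary ones; so each of the `n` steps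
scales the distance by `μ`. -/

def SameHalf (a b : ℝ) : Prop :=
  (a ≤ 1/2 ∧ b ≤ 1/2) ∨ (1/2 ≤ a ∧ 1/2 ≤ b)

lemma tentMap_of_half_le (μ : ℝ) {a : ℝ} (h : 1/2 ≤ a) : tentMap μ a = μ * (1 - a) := by
  unfold tentMap
  split_ifs with ha
  · rw [le_antisymm ha h]; norm_num
  · rfl

lemma abs_tentMap_sub_of_sameHalf {μ : ℝ} (hμ : 0 ≤ μ) {a b : ℝ} (h : SameHalf a b) :
    |tentMap μ a - tentMap μ b| = μ * |a - b| := by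
  rcases h with ⟨ha, hb⟩ | ⟨ha, hb⟩
  · rw [tentMap, tentMap, if_pos ha, if_pos hb, ← mul_sub, abs_mul, abs_of_nonneg hμ]
  · rw [tentMap_of_half_le μ ha, tentMap_of_half_le μ hb,
      show μ * (1 - a) - μ * (1 - b) = -(μ * (a - b)) by ring, abs_neg, abs_mul,
      abs_of_nonneg hμ]

section Code

variable {μ x x' : ℝ}

lemma sameHalf_of_tentBit_zero_eq (h : tentBit μ x 0 = tentBit μ x' 0) : SameHalf x x' := by
  unfold SameHalf
  simp only [tentBit] at h
  split_ifs at h <;> grind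

lemma sameHalf_iterate_succ_of_tentBit_eq {j : ℕ} (h : tentBit μ x j = tentBit μ x' j)
    (hsucc : tentBit μ x (j + 1) = tentBit μ x' (j + 1)) :
    SameHalf ((tentMap μ)^[j + 1] x) ((tentMap μ)^[j + 1] x') := by
  by_contra hne
  obtain ⟨ha, hb⟩ | ⟨ha, hb⟩ :
      ((tentMap μ)^[j + 1] x < 1/2 ∧ 1/2 < (tentMap μ)^[j + 1] x') ∨
        (1/2 < (tentMap μ)^[j + 1] x ∧ (tentMap μ)^[j + 1] x' < 1/2) := by
    unfold SameHalf at hne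
    grind
  · rw [tentBit, tentBit, if_pos ha, if_neg hb.not_gt, if_pos hb, h] at hsucc
    simp at hsucc
  · rw [tentBit, tentBit, if_neg ha.not_gt, if_pos ha, if_pos hb, h] at hsucc
    simp at hsucc

lemma sameHalf_iterate_of_tentBit_eq {k : ℕ} (h : ∀ i ≤ k, tentBit μ x i = tentBit μ x' i) :
    SameHalf ((tentMap μ)^[k] x) ((tentMap μ)^[k] x') := by
  cases k with
  | zero => exact sameHalf_of_tentBit_zero_eq (h 0 le_rfl)
  | succ j => exact sameHalf_iterate_succ_of_tentBit_eq (h j (by omega)) (h (j + 1) le_rfl)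

lemma abs_iterate_tentMap_sub_of_tentBit_eq (hμ : 0 ≤ μ) {n : ℕ}
    (h : ∀ i < n, tentBit μ x i = tentBit μ x' i) :
    |(tentMap μ)^[n] x - (tentMap μ)^[n] x'| = μ ^ n * |x - x'| := by
  induction n with
  | zero => simp
  | succ n ih =>
    have hhalf := sameHalf_iterate_of_tentBit_eq fun i hi => h i (Nat.lt_succ_of_le hi)
    rw [Function.iterate_succ_apply', Function.iterate_succ_apply',
      abs_tentMap_sub_of_sameHalf hμ hhalf, ih fun i hi => h i (Nat.lt_succ_of_lt hi), pow_succ]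
    ring

lemma tentBit_eq_of_tentCode_eq {n : ℕ} (h : tentCode μ n x = tentCode μ n x') :
    ∀ i < n, tentBit μ x i = tentBit μ x' i :=
  fun i hi => List.map_eq_map_iff.mp h i (List.mem_range.mpr hi)

end Code

theorem tent_iterate_dist_of_code_eq_general (μ : ℝ) (hμ1 : 1 < μ)
    (n : ℕ) (x x' : ℝ)
    (hcode : tentCode μ n x = tentCode μ n x') :
    |(tentMap μ)^[n] x - (tentMap μ)^[n] x'| = μ ^ n * |x - x'| :=
  abs_iterate_tentMap_sub_of_tentBit_eq (zero_lt_one.trans hμ1).le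
    (tentBit_eq_of_tentCode_eq hcode)

/-- `|f^n(x) - f^n(x')| = μ^n |x - x'|` if the `n`-bit codes coincide. -/
theorem tent_iterate_dist_of_code_eq (μ : ℝ) (hμ1 : 1 < μ) (hμ2 : μ < 2)
    (n : ℕ) (hn : 1 ≤ n) (x x' : ℝ) (hx : x ∈ Set.Ico (0:ℝ) 1) (hx' : x' ∈ Set.Ico (0:ℝ) 1)
    (hcode : tentCode μ n x = tentCode μ n x') :
    |(tentMap μ)^[n] x - (tentMap μ)^[n] x'| = μ ^ n * |x - x'| :=
  tent_iterate_dist_of_code_eq_general μ hμ1 n x x' hcode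
end

section
/- Let μ ∈ (1,2) and n ≥ 1. For every b ∈ L_n, the segment-type T(b) is a half-open interval: there exist reals v < u with 0 ≤ v and u ≤ 1 such that T(b) = [v,u) or T(b) = (v,u]. -/
open Set MeasureTheory

/-! By induction on `n`, `T(w)` is an interval `[v, u)` or `(v, u]` inside `[0, 1]`, with the closed
end decided by the last letter of `w`. Appending a letter `b` to `w` cuts `T(w)` at the turning point
`1/2`, keeping the half on which the next letter is `b`; this half is mapped onto an interval by a
single affine branch of the tent map, increasing (which keeps the closed end) when `b` repeats the
last letter of `w` and decreasing (which swaps it) otherwise. Since `μ ≤ 2` each half is mapped into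
`[0, 1]`, and since `w ∈ L_n` the interval `T(w)` is nonempty. -/

/-- The rule producing the letter after `c` when the orbit is at `z`; the first letter of a tent code
is the one after `false`. -/
noncomputable def tentBitStep (z : ℝ) (c : Bool) : Bool :=
  if z < 1/2 then c else if 1/2 < z then !c else true

theorem tentBit_zero_eq_tentBitStep (μ x : ℝ) : tentBit μ x 0 = tentBitStep x false := by
  simp only [tentBit, tentBitStep]
  split_ifs <;> first | rfl | linarith

theorem tentCode_succ (μ : ℝ) (n : ℕ) (x : ℝ) :
    tentCode μ (n + 1) x =
      tentCode μ n x ++ [tentBitStep ((tentMap μ)^[n] x) ((tentCode μ n x).getLastD false)] := by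
  rw [tentCode, List.range_succ, List.map_append]
  cases n with
  | zero => simp [tentCode, tentBit_zero_eq_tentBitStep]
  | succ k =>
    have hlast : (tentCode μ (k + 1) x).getLastD false = tentBit μ x k := by
      simp [tentCode, List.range_succ]
    rw [hlast]
    rfl

theorem segType_zero_nil (μ : ℝ) : segType μ 0 [] = Ico 0 1 := by
  ext y
  simp [segType, tentCode]

theorem segType_eq_empty_of_length_ne (μ : ℝ) {n : ℕ} {w : List Bool} (h : w.length ≠ n) :
    segType μ n w = ∅ := by
  refine eq_empty_of_forall_notMem ?_
  rintro _ ⟨x, -, rfl, -⟩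
  simp [tentCode] at h

theorem segType_append_singleton (μ : ℝ) (n : ℕ) (w : List Bool) (b : Bool) :
    segType μ (n + 1) (w ++ [b]) =
      tentMap μ '' (segType μ n w ∩ {z | tentBitStep z (w.getLastD false) = b}) := by
  ext y
  constructor
  · rintro ⟨x, hx, hcode, rfl⟩
    rw [tentCode_succ] at hcode
    obtain ⟨rfl, hb⟩ := List.append_inj' hcode rfl
    exact ⟨_, ⟨⟨x, hx, rfl, rfl⟩, List.singleton_inj.mp hb⟩,
      (Function.iterate_succ_apply' _ _ _).symm⟩
  · rintro ⟨_, ⟨⟨x, hx, rfl, rfl⟩, hb⟩, rfl⟩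
    exact ⟨x, hx, by rw [tentCode_succ, hb], Function.iterate_succ_apply' _ _ _⟩

section HalfOpenInterval

variable {α : Type*} [Preorder α]

def halfOpenInterval (rightClosed : Bool) (a b : α) : Set α :=
  bif rightClosed then Ioc a b else Ico a b

theorem halfOpenInterval_subset_Icc (c : Bool) (a b : α) : halfOpenInterval c a b ⊆ Icc a b := by
  cases c
  exacts [Ico_subset_Icc_self, Ioc_subset_Icc_self]

theorem halfOpenInterval_self (c : Bool) (a : α) : halfOpenInterval c a a = ∅ := by
  cases c <;> simp [halfOpenInterval]

theorem nonempty_halfOpenInterval {c : Bool} {a b : α} :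
    (halfOpenInterval c a b).Nonempty ↔ a < b := by
  cases c
  exacts [nonempty_Ico, nonempty_Ioc]

end HalfOpenInterval

theorem halfOpenInterval_inter_tentBitStep_self (c : Bool) (v u : ℝ) :
    halfOpenInterval c v u ∩ {z | tentBitStep z c = c} = halfOpenInterval c v (min u (1/2)) := by
  ext z
  cases c <;> grind [halfOpenInterval, tentBitStep]

theorem halfOpenInterval_inter_tentBitStep_not (c : Bool) (v u : ℝ) :
    halfOpenInterval c v u ∩ {z | tentBitStep z c = !c} = halfOpenInterval c (max v (1/2)) u := by
  ext z
  cases c <;> grind [halfOpenInterval, tentBitStep]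

section Image

variable {μ : ℝ}

theorem tentMap_image_halfOpenInterval_of_le_half (hμ : 0 < μ) (c : Bool) {v u : ℝ}
    (hu : u ≤ 1/2) :
    tentMap μ '' halfOpenInterval c v u = halfOpenInterval c (μ * v) (μ * u) := by
  have hEq : EqOn (tentMap μ) (μ * ·) (halfOpenInterval c v u) := fun z hz =>
    if_pos ((halfOpenInterval_subset_Icc c v u hz).2.trans hu)
  rw [hEq.image_eq]
  cases c
  exacts [image_mul_left_Ico hμ v u, image_mul_left_Ioc hμ v u]

theorem tentMap_image_halfOpenInterval_of_half_le (hμ : 0 < μ) (c : Bool) {v u : ℝ}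
    (hv : 1/2 ≤ v) :
    tentMap μ '' halfOpenInterval c v u = halfOpenInterval (!c) (μ * (1 - u)) (μ * (1 - v)) := by
  have hEq : EqOn (tentMap μ) ((μ * ·) ∘ (1 - ·)) (halfOpenInterval c v u) := fun z hz => by
    have hz : 1/2 ≤ z := hv.trans (halfOpenInterval_subset_Icc c v u hz).1
    rcases hz.eq_or_lt with rfl | hz
    · norm_num [tentMap]
    · exact if_neg hz.not_ge
  rw [hEq.image_eq, image_comp]
  cases c
  · rw [halfOpenInterval, cond_false, image_const_sub_Ico, image_mul_left_Ioc hμ]; rfl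
  · rw [halfOpenInterval, cond_true, image_const_sub_Ioc, image_mul_left_Ico hμ]; rfl

theorem exists_tentMap_image_halfOpenInterval_inter_eq (hμ0 : 0 < μ) (hμ2 : μ ≤ 2)
    (c b : Bool) {v u : ℝ} (hv : 0 ≤ v) (hu : u ≤ 1) :
    ∃ v' u', 0 ≤ v' ∧ u' ≤ 1 ∧
      tentMap μ '' (halfOpenInterval c v u ∩ {z | tentBitStep z c = b}) =
        halfOpenInterval b v' u' := by
  obtain rfl | rfl : b = c ∨ b = !c := by cases b <;> cases c <;> decide
  · rw [halfOpenInterval_inter_tentBitStep_self,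
      tentMap_image_halfOpenInterval_of_le_half hμ0 _ (min_le_right _ _)]
    refine ⟨_, _, by positivity, ?_, rfl⟩
    nlinarith [min_le_right u (1/2)]
  · rw [halfOpenInterval_inter_tentBitStep_not,
      tentMap_image_halfOpenInterval_of_half_le hμ0 _ (le_max_right _ _)]
    refine ⟨_, _, by nlinarith, ?_, rfl⟩
    nlinarith [le_max_right v (1/2)]

end Image

theorem exists_segType_eq_halfOpenInterval {μ : ℝ} (hμ0 : 0 < μ) (hμ2 : μ ≤ 2) (n : ℕ)
    (w : List Bool) :
    ∃ v u, 0 ≤ v ∧ u ≤ 1 ∧ segType μ n w = halfOpenInterval (w.getLastD false) v u := by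
  have of_length_ne {n : ℕ} {w : List Bool} (h : w.length ≠ n) :
      ∃ v u, 0 ≤ v ∧ u ≤ (1 : ℝ) ∧ segType μ n w = halfOpenInterval (w.getLastD false) v u :=
    ⟨0, 0, le_rfl, zero_le_one, by rw [segType_eq_empty_of_length_ne μ h, halfOpenInterval_self]⟩
  induction n generalizing w with
  | zero =>
    rcases w.eq_nil_or_concat with rfl | ⟨w, b, rfl⟩
    · exact ⟨0, 1, le_rfl, le_rfl, segType_zero_nil μ⟩
    · exact of_length_ne (by simp)
  | succ n ih =>
    rcases w.eq_nil_or_concat with rfl | ⟨w, b, rfl⟩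
    · exact of_length_ne (by simp)
    · obtain ⟨v, u, hv, hu, hT⟩ := ih w
      rw [List.concat_eq_append, segType_append_singleton, hT, List.getLastD_concat]
      exact exists_tentMap_image_halfOpenInterval_inter_eq hμ0 hμ2 _ b hv hu

theorem segType_halfopen_general (μ : ℝ) (hμ1 : 1 < μ) (hμ2 : μ < 2)
    (n : ℕ) (w : List Bool) (hw : w ∈ tentLang μ n) :
    ∃ v u : ℝ, v < u ∧ 0 ≤ v ∧ u ≤ 1 ∧
      (segType μ n w = Set.Ico v u ∨ segType μ n w = Set.Ioc v u) := by
  obtain ⟨v, u, hv, hu, hT⟩ := exists_segType_eq_halfOpenInterval (by linarith) hμ2.le n w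
  obtain ⟨x, hx, hcode⟩ := hw
  have hne : (halfOpenInterval (w.getLastD false) v u).Nonempty := hT ▸ ⟨_, x, hx, hcode, rfl⟩
  refine ⟨v, u, nonempty_halfOpenInterval.mp hne, hv, hu, ?_⟩
  rw [hT]
  cases w.getLastD false
  exacts [Or.inl rfl, Or.inr rfl]

/-- every segment-type is a half-open interval contained in `[0,1]`. -/
theorem segType_halfopen (μ : ℝ) (hμ1 : 1 < μ) (hμ2 : μ < 2)
    (n : ℕ) (hn : 1 ≤ n) (w : List Bool) (hw : w ∈ tentLang μ n) :
    ∃ v u : ℝ, v < u ∧ 0 ≤ v ∧ u ≤ 1 ∧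
      (segType μ n w = Set.Ico v u ∨ segType μ n w = Set.Ioc v u) :=
  segType_halfopen_general μ hμ1 hμ2 n w hw
end

section
/- Let μ ∈ (1,2), let n ≥ 2, let x₀ ∈ [0,1), let ε > 0, and assume [x₀ − ε, x₀ + ε] ⊆ [0,1). Then for every integer k ≥ ⌈2 log_μ n⌉ and every y ∈ (x₀ − ε + 1/n², x₀ + ε − 1/n²), one has {f^k(y') : y' ∈ [x₀ − ε, x₀ + ε], γ^k(y') = γ^k(y)} = T(γ^k(y)). -/
open Set MeasureTheory

lemma tentBit_zero_true {μ x : ℝ} (h : tentBit μ x 0 = true) : 1/2 ≤ x := by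
  simp only [tentBit] at h
  split_ifs at h with h'
  · exact h'

lemma tentBit_zero_false {μ x : ℝ} (h : tentBit μ x 0 = false) : x ≤ 1/2 := by
  simp only [tentBit] at h
  split_ifs at h with h'
  · linarith [not_le.mp h']

lemma tentBit_succ_eq {μ x : ℝ} {i : ℕ} (h : tentBit μ x (i+1) = tentBit μ x i) :
    (tentMap μ)^[i+1] x ≤ 1/2 := by
  rw [tentBit] at h
  split_ifs at h with h1 h2
  · exact le_of_lt h1
  · simp at h
  · linarith [not_lt.mp h2]

lemma tentBit_succ_ne {μ x : ℝ} {i : ℕ} (h : tentBit μ x (i+1) ≠ tentBit μ x i) :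
    1/2 ≤ (tentMap μ)^[i+1] x := by
  by_contra hc
  apply h
  rw [tentBit, if_pos (not_le.mp hc)]

lemma tentCode_bits {μ : ℝ} {k : ℕ} {x y : ℝ} (h : tentCode μ k x = tentCode μ k y)
    {i : ℕ} (hi : i < k) : tentBit μ x i = tentBit μ y i := by
  have := congrArg (fun l => l.getD i false) h
  simpa [tentCode, List.getD_eq_getElem?_getD, List.getElem?_map, List.getElem?_range, hi] using this

lemma tentMap_mem {μ : ℝ} (hμ0 : 0 < μ) (hμ2 : μ < 2) {x : ℝ}
    (hx : x ∈ Set.Ico (0:ℝ) 1) : tentMap μ x ∈ Set.Ico (0:ℝ) 1 := by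
  obtain ⟨h0, h1⟩ := hx
  unfold tentMap
  split_ifs with h
  · exact ⟨by positivity, by nlinarith⟩
  · push_neg at h
    exact ⟨by nlinarith, by nlinarith⟩

lemma tentMap_iter_mem {μ : ℝ} (hμ0 : 0 < μ) (hμ2 : μ < 2) {x : ℝ}
    (hx : x ∈ Set.Ico (0:ℝ) 1) (i : ℕ) : (tentMap μ)^[i] x ∈ Set.Ico (0:ℝ) 1 := by
  induction i with
  | zero => simpa using hx
  | succ j ih => rw [Function.iterate_succ_apply']; exact tentMap_mem hμ0 hμ2 ih

lemma tent_same_side {μ : ℝ} {x y : ℝ} {k : ℕ}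
    (h : ∀ i < k, tentBit μ x i = tentBit μ y i) {i : ℕ} (hi : i < k) :
    ((tentMap μ)^[i] x ≤ 1/2 ∧ (tentMap μ)^[i] y ≤ 1/2) ∨
      (1/2 ≤ (tentMap μ)^[i] x ∧ 1/2 ≤ (tentMap μ)^[i] y) := by
  cases i with
  | zero =>
    have hb := h 0 (by omega)
    simp only [Function.iterate_zero_apply]
    cases hbx : tentBit μ x 0 with
    | false => exact Or.inl ⟨tentBit_zero_false hbx, tentBit_zero_false (hb.symm.trans hbx)⟩
    | true => exact Or.inr ⟨tentBit_zero_true hbx, tentBit_zero_true (hb.symm.trans hbx)⟩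
  | succ j =>
    have h1 := h (j+1) hi
    have h2 := h j (by omega)
    by_cases hbx : tentBit μ x (j+1) = tentBit μ x j
    · exact Or.inl ⟨tentBit_succ_eq hbx, tentBit_succ_eq (by rw [← h1, ← h2]; exact hbx)⟩
    · exact Or.inr ⟨tentBit_succ_ne hbx, tentBit_succ_ne (by rw [← h1, ← h2]; exact hbx)⟩

lemma tentMap_dist {μ : ℝ} (hμ0 : 0 ≤ μ) {a b : ℝ}
    (h : (a ≤ 1/2 ∧ b ≤ 1/2) ∨ (1/2 ≤ a ∧ 1/2 ≤ b)) :
    |tentMap μ a - tentMap μ b| = μ * |a - b| := by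
  have key : ∀ c : ℝ, 1/2 ≤ c → tentMap μ c = μ * (1 - c) := by
    intro c hc
    unfold tentMap
    split_ifs with h'
    · have : c = 1/2 := le_antisymm h' hc
      rw [this]; norm_num
    · rfl
  rcases h with ⟨ha, hb⟩ | ⟨ha, hb⟩
  · unfold tentMap
    rw [if_pos ha, if_pos hb, ← mul_sub, abs_mul, abs_of_nonneg hμ0]
  · rw [key a ha, key b hb, ← mul_sub, abs_mul, abs_of_nonneg hμ0,
      show (1:ℝ) - a - (1 - b) = -(a - b) by ring, abs_neg]

lemma tent_dist {μ : ℝ} (hμ1 : 1 < μ) {x y : ℝ} {k : ℕ}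
    (h : ∀ i < k, tentBit μ x i = tentBit μ y i) :
    ∀ i ≤ k, |(tentMap μ)^[i] x - (tentMap μ)^[i] y| = μ ^ i * |x - y| := by
  intro i hik
  induction i with
  | zero => simp
  | succ j ih =>
    rw [Function.iterate_succ_apply', Function.iterate_succ_apply',
      tentMap_dist (by linarith) (tent_same_side h (by omega)), ih (by omega), pow_succ]
    ring


/-- after `⌈2 log_μ n⌉` iterations, a uniform point of
`[x₀-ε, x₀+ε]` fully covers the interior points of the interval. -/
theorem tent_fully_covers (μ : ℝ) (hμ1 : 1 < μ) (hμ2 : μ < 2)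
    (n : ℕ) (hn : 2 ≤ n) (x₀ ε : ℝ) (hε : 0 < ε)
    (hsub : Set.Icc (x₀ - ε) (x₀ + ε) ⊆ Set.Ico (0:ℝ) 1)
    (k : ℕ) (hk : ⌈2 * Real.logb μ n⌉₊ ≤ k)
    (y : ℝ) (hy : y ∈ Set.Ioo (x₀ - ε + 1/(n:ℝ)^2) (x₀ + ε - 1/(n:ℝ)^2)) :
    (tentMap μ)^[k] ''
        {y' ∈ Set.Icc (x₀ - ε) (x₀ + ε) | tentCode μ k y' = tentCode μ k y} =
      segType μ k (tentCode μ k y) := by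
  have hμ0 : (0:ℝ) < μ := by linarith
  have hnR : (0:ℝ) < (n:ℝ) := by exact_mod_cast (by omega : 0 < n)
  have hn2 : (0:ℝ) < (n:ℝ)^2 := by positivity
  -- μ^k ≥ n^2
  have hlog : 2 * Real.logb μ n ≤ (k:ℝ) := by
    exact_mod_cast Nat.ceil_le.mp hk
  have hkn : ((n:ℝ))^2 ≤ μ ^ k := by
    have h1 : (n:ℝ)^2 = μ ^ (2 * Real.logb μ (n:ℝ) : ℝ) := by
      rw [mul_comm, Real.rpow_mul hμ0.le, Real.rpow_logb hμ0 hμ1.ne' hnR,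
        Real.rpow_two]
    have h2 : μ ^ (2 * Real.logb μ (n:ℝ) : ℝ) ≤ μ ^ ((k:ℝ) : ℝ) :=
      (Real.rpow_le_rpow_left_iff hμ1).mpr hlog
    rw [h1]
    calc μ ^ (2 * Real.logb μ (n:ℝ) : ℝ) ≤ μ ^ ((k:ℝ):ℝ) := h2
      _ = μ ^ k := Real.rpow_natCast μ k
  have hyIcc : y ∈ Set.Icc (x₀ - ε) (x₀ + ε) := by
    obtain ⟨h1, h2⟩ := hy
    constructor <;> nlinarith [one_div_pos.mpr hn2]
  have hyIco : y ∈ Set.Ico (0:ℝ) 1 := hsub hyIcc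
  ext z
  constructor
  · rintro ⟨y', ⟨hy'mem, hy'code⟩, rfl⟩
    exact ⟨y', hsub hy'mem, hy'code, rfl⟩
  · rintro ⟨x, hx, hxcode, rfl⟩
    refine ⟨x, ⟨?_, hxcode⟩, rfl⟩
    -- distance bound
    have hbits : ∀ i < k, tentBit μ x i = tentBit μ y i := fun i hi => tentCode_bits hxcode hi
    have hd := tent_dist hμ1 hbits k le_rfl
    have hxk := tentMap_iter_mem hμ0 hμ2 hx k
    have hyk := tentMap_iter_mem hμ0 hμ2 hyIco k
    have habs : |(tentMap μ)^[k] x - (tentMap μ)^[k] y| ≤ 1 := by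
      rw [abs_le]
      constructor <;> [linarith [hxk.1, hyk.2]; linarith [hxk.2, hyk.1]]
    have hbound : μ ^ k * |x - y| ≤ 1 := by rw [← hd]; exact habs
    have hdist : |x - y| ≤ 1/(n:ℝ)^2 := by
      rw [le_div_iff₀ hn2]
      nlinarith [abs_nonneg (x - y)]
    have := abs_le.mp hdist
    obtain ⟨h1, h2⟩ := hy
    constructor <;> linarith [this.1, this.2]
end
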